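/- The leading sound-hard time reversal operator T⁰ is a bounded, self-adjoint, positive operator on L²(Ŝ), and its range is contained in the direct sum ⊕_{l=1}^M 𝒜_l, where 𝒜_l = span_ℂ{g_l, h_{l,1}, h_{l,2}}; in particular T⁰ has finite rank at most 3M. -/

import Mathlib

noncomputable section
open MeasureTheory Real Set

/-- Points of the plane `ℝ²` with the Euclidean norm. -/
abbrev R2 : Type := EuclideanSpace ℝ (Fin 2)

/-- The critical angle `θ_c`. -/
def thetaC (kp km : ℝ) : ℝ := if km < kp then Real.arccos (km / kp) else 0

/-- The emission aperture `Ŝ`, as the interval of angles `(π+θ_c, 2π−θ_c)`. -/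
def Sarc (kp km : ℝ) : Set ℝ :=
  Set.Ioo (Real.pi + thetaC kp km) (2 * Real.pi - thetaC kp km)

/-- The measurement aperture `−Ŝ`, as the interval of angles `(θ_c, π−θ_c)`. -/
def Tarc (kp km : ℝ) : Set ℝ :=
  Set.Ioo (thetaC kp km) (Real.pi - thetaC kp km)

/-- The transmitted direction `v(d)` of the unit direction `d` with angle `θ`,
with `μ = k₊/k₋`:  `v(d) = (μ d₁, sign(d₂) √(1 − μ² d₁²))`. -/
def vdir (kp km θ : ℝ) : Fin 2 → ℝ := fun i =>
  if i = 0 then (kp / km) * Real.cos θ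
  else Real.sign (Real.sin θ) * Real.sqrt (1 - (kp / km) ^ 2 * (Real.cos θ) ^ 2)

/-- The transmission coefficient `Q(d) = 2μd₂/(μd₂ + v₂(d))` of the direction with angle `θ`. -/
def Qco (kp km θ : ℝ) : ℝ :=
  2 * (kp / km) * Real.sin θ / ((kp / km) * Real.sin θ + vdir kp km θ 1)

/-- Dot product of a direction vector with a point of `ℝ²`. -/
def dotp (u : Fin 2 → ℝ) (y : R2) : ℝ := u 0 * y 0 + u 1 * y 1

/-- `e_l(α) = e^{−i k₋ v(α)·s_l}` and `g_l(α) = Q(α) e_l(α)` (monopole far field at `s_l`). -/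
def gfun (kp km : ℝ) (s : R2) (θ : ℝ) : ℂ :=
  (Qco kp km θ : ℂ) *
    Complex.exp (-(Complex.I * (km : ℂ) * ((dotp (vdir kp km θ) s : ℝ) : ℂ)))

/-- `h_{l,j}(α) = (𝐞_j · v(α)) Q(α) e_l(α)` (dipole far field at `s_l` in direction `𝐞_j`). -/
def hfun (kp km : ℝ) (s : R2) (j : Fin 2) (θ : ℝ) : ℂ :=
  ((vdir kp km θ j : ℝ) : ℂ) * gfun kp km s θ

/-- Leading sound-hard far-field kernel
`A⁰(γ,α) = Q(γ)Q(α) Σ_j e^{−i k₋ (v(γ)−v(α))·s_j} (v(γ)·M_j v(α) + V_j)`. -/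
def A0hard (kp km : ℝ) {M : ℕ} (s : Fin M → R2)
    (Mm : Fin M → Fin 2 → Fin 2 → ℝ) (V : Fin M → ℝ) (γ α : ℝ) : ℂ :=
  (Qco kp km γ : ℂ) * (Qco kp km α : ℂ) *
    ∑ j, Complex.exp (-(Complex.I * (km : ℂ) *
        ((dotp (vdir kp km γ) (s j) - dotp (vdir kp km α) (s j) : ℝ) : ℂ))) *
      (((∑ i, ∑ i', vdir kp km γ i * Mm j i i' * vdir kp km α i') + V j : ℝ) : ℂ)

/-- Kernel of the leading sound-hard time reversal operator:
`t⁰(β, α) = ∫_{−Ŝ} A⁰(γ, α) conj(A⁰(γ, β)) ds_γ`. -/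
def t0hard (kp km : ℝ) {M : ℕ} (s : Fin M → R2)
    (Mm : Fin M → Fin 2 → Fin 2 → ℝ) (V : Fin M → ℝ) (β α : ℝ) : ℂ :=
  ∫ γ in Tarc kp km, A0hard kp km s Mm V γ α * (starRingEnd ℂ) (A0hard kp km s Mm V γ β)

/- ### auxiliary lemmas -/

lemma measurable_realSign : Measurable Real.sign := by
  have : Real.sign = fun r : ℝ => if r < 0 then (-1 : ℝ) else if 0 < r then 1 else 0 := by
    funext r; rfl
  rw [this]
  exact Measurable.ite (measurableSet_lt measurable_id measurable_const)
    measurable_const (Measurable.ite (measurableSet_lt measurable_const measurable_id)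
      measurable_const measurable_const)

lemma measurable_vdir (kp km : ℝ) (i : Fin 2) : Measurable (fun θ => vdir kp km θ i) := by
  unfold vdir
  by_cases hi : i = 0
  · simp only [hi, eq_self_iff_true, if_true]; fun_prop
  · simp only [if_neg hi]
    exact (measurable_realSign.comp Real.measurable_sin).mul
      (Real.continuous_sqrt.measurable.comp (by fun_prop))

lemma measurable_Qco (kp km : ℝ) : Measurable (Qco kp km) := by
  unfold Qco
  exact (by fun_prop : Measurable fun θ => 2 * (kp / km) * Real.sin θ).div
    ((by fun_prop : Measurable fun θ => (kp / km) * Real.sin θ).add (measurable_vdir kp km 1))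

lemma abs_vdir_le (kp km : ℝ) (θ : ℝ) (i : Fin 2) : |vdir kp km θ i| ≤ |kp / km| + 1 := by
  unfold vdir
  by_cases hi : i = 0
  · simp only [hi, eq_self_iff_true, if_true, abs_mul]
    calc |kp / km| * |Real.cos θ| ≤ |kp / km| * 1 := by
          exact mul_le_mul_of_nonneg_left (Real.abs_cos_le_one θ) (abs_nonneg _)
      _ ≤ |kp / km| + 1 := by linarith [abs_nonneg (kp / km)]
  · simp only [if_neg hi, abs_mul]
    have h1 : |Real.sign (Real.sin θ)| ≤ 1 := by
      rcases Real.sign_apply_eq (Real.sin θ) with h | h | h <;> rw [h] <;> norm_num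
    have h2 : |Real.sqrt (1 - (kp / km) ^ 2 * Real.cos θ ^ 2)| ≤ 1 := by
      rw [abs_of_nonneg (Real.sqrt_nonneg _)]
      exact Real.sqrt_le_one.mpr (by nlinarith [sq_nonneg (kp / km * Real.cos θ), sq_nonneg (kp/km), sq_nonneg (Real.cos θ)])
    nlinarith [abs_nonneg (Real.sign (Real.sin θ)), abs_nonneg (kp/km)]

lemma abs_Qco_le (kp km : ℝ) (hμ : 0 ≤ kp / km) (θ : ℝ) : |Qco kp km θ| ≤ 2 := by
  unfold Qco
  set a : ℝ := (kp / km) * Real.sin θ with ha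
  set b : ℝ := vdir kp km θ 1 with hb
  have hkey : |a| ≤ |a + b| := by
    have ht : 0 ≤ Real.sqrt (1 - (kp / km) ^ 2 * Real.cos θ ^ 2) := Real.sqrt_nonneg _
    rcases lt_trichotomy (Real.sin θ) 0 with h | h | h
    · have hb' : b ≤ 0 := by
        rw [hb]; unfold vdir; simp only [if_neg (by norm_num : (1 : Fin 2) ≠ 0)]
        rw [Real.sign_of_neg h]; nlinarith
      have ha' : a ≤ 0 := mul_nonpos_of_nonneg_of_nonpos hμ h.le
      rw [abs_of_nonpos ha', abs_of_nonpos (by linarith)]; linarith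
    · have : a = 0 := by rw [ha, h, mul_zero]
      simp [this]
    · have hb' : 0 ≤ b := by
        rw [hb]; unfold vdir; simp only [if_neg (by norm_num : (1 : Fin 2) ≠ 0)]
        rw [Real.sign_of_pos h]; nlinarith
      have ha' : 0 ≤ a := mul_nonneg hμ h.le
      rw [abs_of_nonneg ha', abs_of_nonneg (by linarith)]; linarith
  by_cases hd : a + b = 0
  · have : |a| = 0 := le_antisymm (hkey.trans (by simp [hd])) (abs_nonneg _)
    have ha0 : a = 0 := abs_eq_zero.mp this
    have h2 : 2 * (kp / km) * Real.sin θ = 2 * a := by rw [ha]; ring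
    rw [h2, hd]; simp
  · have h2 : 2 * (kp / km) * Real.sin θ = 2 * a := by rw [ha]; ring
    rw [h2, abs_div, abs_mul, abs_two]
    rw [div_le_iff₀ (abs_pos.mpr hd)]
    nlinarith [abs_nonneg a, abs_nonneg (a + b)]

lemma norm_ofReal (r : ℝ) : ‖((r : ℝ) : ℂ)‖ = |r| := by
  simp [Complex.norm_real]

lemma norm_exp_I_mul (c x : ℝ) : ‖Complex.exp (-(Complex.I * (c : ℂ) * (x : ℂ)))‖ = 1 := by
  rw [Complex.norm_exp]
  simp

lemma norm_exp_I_mul' (c x : ℝ) : ‖Complex.exp (Complex.I * (c : ℂ) * (x : ℂ))‖ = 1 := by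
  rw [Complex.norm_exp]
  simp

lemma norm_gfun_le (kp km : ℝ) (hμ : 0 ≤ kp / km) (p : R2) (θ : ℝ) :
    ‖gfun kp km p θ‖ ≤ 2 := by
  rw [gfun, norm_mul, norm_exp_I_mul, mul_one, norm_ofReal]
  exact abs_Qco_le kp km hμ θ

lemma norm_hfun_le (kp km : ℝ) (hμ : 0 ≤ kp / km) (p : R2) (j : Fin 2) (θ : ℝ) :
    ‖hfun kp km p j θ‖ ≤ (|kp / km| + 1) * 2 := by
  rw [hfun, norm_mul, norm_ofReal]
  exact mul_le_mul (abs_vdir_le kp km θ j) (norm_gfun_le kp km hμ p θ) (norm_nonneg _)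
    (by positivity)

lemma measurable_gfun (kp km : ℝ) (p : R2) : Measurable (gfun kp km p) := by
  unfold gfun dotp
  apply Measurable.mul
  · exact Complex.measurable_ofReal.comp (measurable_Qco kp km)
  · apply Complex.measurable_exp.comp
    apply Measurable.neg
    apply Measurable.mul measurable_const
    exact Complex.measurable_ofReal.comp
      (((measurable_vdir kp km 0).mul measurable_const).add
        ((measurable_vdir kp km 1).mul measurable_const))

lemma measurable_hfun (kp km : ℝ) (p : R2) (j : Fin 2) : Measurable (hfun kp km p j) := by
  unfold hfun
  exact (Complex.measurable_ofReal.comp (measurable_vdir kp km j)).mul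
    (measurable_gfun kp km p)

/-- A uniform bound for `A0hard`. -/
def CA0 (kp km : ℝ) {M : ℕ} (Mm : Fin M → Fin 2 → Fin 2 → ℝ) (V : Fin M → ℝ) : ℝ :=
  4 * ∑ j, ((∑ i : Fin 2, ∑ i' : Fin 2,
      (|kp / km| + 1) * |Mm j i i'| * (|kp / km| + 1)) + |V j|)

lemma CA0_nonneg (kp km : ℝ) {M : ℕ} (Mm : Fin M → Fin 2 → Fin 2 → ℝ) (V : Fin M → ℝ) :
    0 ≤ CA0 kp km Mm V := by
  unfold CA0
  have : ∀ j : Fin M, (0:ℝ) ≤ (∑ i : Fin 2, ∑ i' : Fin 2,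
      (|kp / km| + 1) * |Mm j i i'| * (|kp / km| + 1)) + |V j| := by
    intro j
    have : (0:ℝ) ≤ ∑ i : Fin 2, ∑ i' : Fin 2,
        (|kp / km| + 1) * |Mm j i i'| * (|kp / km| + 1) :=
      Finset.sum_nonneg fun i _ => Finset.sum_nonneg fun i' _ => by positivity
    positivity
  exact mul_nonneg (by norm_num) (Finset.sum_nonneg fun j _ => this j)

lemma norm_A0_le (kp km : ℝ) (hμ : 0 ≤ kp / km) {M : ℕ} (s : Fin M → R2)
    (Mm : Fin M → Fin 2 → Fin 2 → ℝ) (V : Fin M → ℝ) (γ α : ℝ) :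
    ‖A0hard kp km s Mm V γ α‖ ≤ CA0 kp km Mm V := by
  unfold A0hard CA0
  rw [norm_mul, norm_mul, norm_ofReal, norm_ofReal]
  have hsum : ‖∑ j, Complex.exp (-(Complex.I * (km : ℂ) *
        ((dotp (vdir kp km γ) (s j) - dotp (vdir kp km α) (s j) : ℝ) : ℂ))) *
      (((∑ i, ∑ i', vdir kp km γ i * Mm j i i' * vdir kp km α i') + V j : ℝ) : ℂ)‖ ≤
      ∑ j, ((∑ i : Fin 2, ∑ i' : Fin 2,
      (|kp / km| + 1) * |Mm j i i'| * (|kp / km| + 1)) + |V j|) := by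
    refine (norm_sum_le _ _).trans (Finset.sum_le_sum fun j _ => ?_)
    rw [norm_mul, norm_exp_I_mul, one_mul, norm_ofReal]
    refine (abs_add_le _ _).trans (add_le_add ?_ le_rfl)
    refine (Finset.abs_sum_le_sum_abs _ _).trans (Finset.sum_le_sum fun i _ => ?_)
    refine (Finset.abs_sum_le_sum_abs _ _).trans (Finset.sum_le_sum fun i' _ => ?_)
    rw [abs_mul, abs_mul]
    have h1 := abs_vdir_le kp km γ i
    have h2 := abs_vdir_le kp km α i'
    have h3 : (0:ℝ) ≤ |kp/km| + 1 := by positivity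
    exact mul_le_mul (mul_le_mul h1 le_rfl (abs_nonneg _) h3) h2 (abs_nonneg _)
      (by positivity)
  calc |Qco kp km γ| * |Qco kp km α| * ‖_‖ ≤ 2 * 2 * (∑ j, ((∑ i : Fin 2, ∑ i' : Fin 2,
      (|kp / km| + 1) * |Mm j i i'| * (|kp / km| + 1)) + |V j|)) := by
        refine mul_le_mul (mul_le_mul (abs_Qco_le kp km hμ γ) (abs_Qco_le kp km hμ α)
          (abs_nonneg _) (by norm_num)) hsum (norm_nonneg _) (by norm_num)
    _ = 4 * ∑ j, ((∑ i : Fin 2, ∑ i' : Fin 2,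
      (|kp / km| + 1) * |Mm j i i'| * (|kp / km| + 1)) + |V j|) := by ring

lemma measurable_A0_uncurry (kp km : ℝ) {M : ℕ} (s : Fin M → R2)
    (Mm : Fin M → Fin 2 → Fin 2 → ℝ) (V : Fin M → ℝ) :
    Measurable (fun p : ℝ × ℝ => A0hard kp km s Mm V p.1 p.2) := by
  unfold A0hard dotp
  have hq : Measurable fun x : ℝ => ((Qco kp km x : ℝ) : ℂ) :=
    Complex.measurable_ofReal.comp (measurable_Qco kp km)
  have hv : ∀ i, Measurable fun x : ℝ => vdir kp km x i := measurable_vdir kp km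
  apply Measurable.mul
  · exact (hq.comp measurable_fst).mul (hq.comp measurable_snd)
  · apply Finset.measurable_sum
    intro j _
    apply Measurable.mul
    · apply Complex.measurable_exp.comp
      apply Measurable.neg
      apply Measurable.mul measurable_const
      apply Complex.measurable_ofReal.comp
      apply Measurable.sub
      · exact (((hv 0).mul measurable_const).add ((hv 1).mul measurable_const)).comp
          measurable_fst
      · exact (((hv 0).mul measurable_const).add ((hv 1).mul measurable_const)).comp
          measurable_snd
    · apply Complex.measurable_ofReal.comp
      apply Measurable.add _ measurable_const
      apply Finset.measurable_sum; intro i _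
      apply Finset.measurable_sum; intro i' _
      exact (((hv i).comp measurable_fst).mul measurable_const).mul
        ((hv i').comp measurable_snd)

/-- Coefficient function `u_l(γ) = Q(γ) e^{i k₋ v(γ)·s_l}`. -/
def ucoef (kp km : ℝ) (p : R2) (γ : ℝ) : ℂ :=
  (Qco kp km γ : ℂ) * Complex.exp (Complex.I * (km : ℂ) * ((dotp (vdir kp km γ) p : ℝ) : ℂ))

lemma measurable_ucoef (kp km : ℝ) (p : R2) : Measurable (ucoef kp km p) := by
  unfold ucoef dotp
  apply Measurable.mul (Complex.measurable_ofReal.comp (measurable_Qco kp km))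
  apply Complex.measurable_exp.comp
  apply Measurable.mul measurable_const
  exact Complex.measurable_ofReal.comp
    (((measurable_vdir kp km 0).mul measurable_const).add
      ((measurable_vdir kp km 1).mul measurable_const))

lemma norm_ucoef_le (kp km : ℝ) (hμ : 0 ≤ kp / km) (p : R2) (γ : ℝ) :
    ‖ucoef kp km p γ‖ ≤ 2 := by
  rw [ucoef, norm_mul, norm_exp_I_mul', mul_one, norm_ofReal]
  exact abs_Qco_le kp km hμ γ

lemma conj_exp_factor (c x y : ℝ) :
    (starRingEnd ℂ) (Complex.exp (-(Complex.I * (c : ℂ) * ((x - y : ℝ) : ℂ)))) =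
      Complex.exp (Complex.I * (c : ℂ) * (x : ℂ)) *
        Complex.exp (-(Complex.I * (c : ℂ) * (y : ℂ))) := by
  rw [← Complex.exp_conj, ← Complex.exp_add]
  congr 1
  simp only [map_neg, map_mul, map_sub, Complex.conj_I, Complex.conj_ofReal,
    Complex.ofReal_sub]
  ring

lemma conjA0 (kp km : ℝ) {M : ℕ} (s : Fin M → R2)
    (Mm : Fin M → Fin 2 → Fin 2 → ℝ) (V : Fin M → ℝ) (γ β : ℝ) :
    (starRingEnd ℂ) (A0hard kp km s Mm V γ β) =
      ∑ l, ucoef kp km (s l) γ * ((V l : ℂ) * gfun kp km (s l) β +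
        ∑ i' : Fin 2, ((∑ i : Fin 2, vdir kp km γ i * Mm l i i' : ℝ) : ℂ) *
          hfun kp km (s l) i' β) := by
  unfold A0hard
  rw [map_mul, map_mul, Complex.conj_ofReal, Complex.conj_ofReal, map_sum]
  rw [Finset.mul_sum]
  refine Finset.sum_congr rfl fun l _ => ?_
  rw [map_mul, conj_exp_factor, Complex.conj_ofReal]
  unfold ucoef gfun hfun
  push_cast
  set E1 : ℂ := Complex.exp (Complex.I * (km : ℂ) * ((dotp (vdir kp km γ) (s l) : ℝ) : ℂ))
  set E2 : ℂ := Complex.exp (-(Complex.I * (km : ℂ) * ((dotp (vdir kp km β) (s l) : ℝ) : ℂ)))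
  rw [Finset.sum_comm (γ := Fin 2)]
  simp only [Finset.mul_sum, Finset.sum_mul, mul_add, add_mul]
  rw [add_comm]
  congr 1
  · ring
  · refine Finset.sum_congr rfl fun i' _ => ?_
    refine Finset.sum_congr rfl fun i _ => ?_
    simp only [gfun]
    push_cast
    ring

/-- the leading sound-hard time reversal operator `T⁰` (a bounded operator on
`L²(Ŝ)` with kernel `t⁰`) is self-adjoint and positive, and its range is contained in
`⊕_{l=1}^M 𝒜_l` with `𝒜_l = span_ℂ{g_l, h_{l,1}, h_{l,2}}`; in particular `T⁰` has finite
rank at most `3M`. -/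
theorem stmt11_leading_hard_operator (kp km : ℝ) (hkp : 0 < kp) (hkm : 0 < km) (hne : kp ≠ km)
    (M : ℕ) (hM : 1 ≤ M) (s : Fin M → R2)
    (hs : Function.Injective s) (hlower : ∀ l, s l 1 < 0)
    (Mm : Fin M → Fin 2 → Fin 2 → ℝ) (hMsymm : ∀ j i i', Mm j i i' = Mm j i' i)
    (V : Fin M → ℝ) (hV : ∀ j, 0 < V j)
    (T0 : Lp ℂ 2 (volume.restrict (Sarc kp km)) →L[ℂ] Lp ℂ 2 (volume.restrict (Sarc kp km)))
    (hT0 : ∀ f : Lp ℂ 2 (volume.restrict (Sarc kp km)), ∀ᵐ β ∂(volume.restrict (Sarc kp km)),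
      (T0 f : ℝ → ℂ) β = ∫ α in Sarc kp km, t0hard kp km s Mm V β α * f α) :
    IsSelfAdjoint T0 ∧
    T0.IsPositive ∧
    (∀ f, ∃ (c : Fin M → ℂ) (d : Fin M → Fin 2 → ℂ),
      (T0 f : ℝ → ℂ) =ᵐ[volume.restrict (Sarc kp km)]
        fun β => ∑ l, (c l * gfun kp km (s l) β + ∑ j, d l j * hfun kp km (s l) j β)) ∧
    Module.finrank ℂ (LinearMap.range
      (T0 : Lp ℂ 2 (volume.restrict (Sarc kp km)) →ₗ[ℂ] Lp ℂ 2 (volume.restrict (Sarc kp km))))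
      ≤ 3 * M := by
  classical
  have hμ : 0 ≤ kp / km := le_of_lt (div_pos hkp hkm)
  haveI hfinS : IsFiniteMeasure (volume.restrict (Sarc kp km)) :=
    ⟨by rw [Measure.restrict_apply_univ, Sarc, Real.volume_Ioo]; exact ENNReal.ofReal_lt_top⟩
  haveI hfinT : IsFiniteMeasure (volume.restrict (Tarc kp km)) :=
    ⟨by rw [Measure.restrict_apply_univ, Tarc, Real.volume_Ioo]; exact ENNReal.ofReal_lt_top⟩
  have hCA := norm_A0_le kp km hμ s Mm V
  have hCAnn := CA0_nonneg kp km Mm V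
  have hAm : Measurable fun p : ℝ × ℝ => A0hard kp km s Mm V p.1 p.2 :=
    measurable_A0_uncurry kp km s Mm V
  have hfint : ∀ f : Lp ℂ 2 (volume.restrict (Sarc kp km)),
      Integrable (f : ℝ → ℂ) (volume.restrict (Sarc kp km)) :=
    fun f => (Lp.memLp f).integrable one_le_two
  -- the auxiliary transform G
  set G : Lp ℂ 2 (volume.restrict (Sarc kp km)) → ℝ → ℂ :=
    fun f γ => ∫ α in Sarc kp km, A0hard kp km s Mm V γ α * f α with hG
  have hGm : ∀ f, AEStronglyMeasurable (G f) (volume.restrict (Tarc kp km)) := by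
    intro f
    have h1 : AEStronglyMeasurable
        (fun p : ℝ × ℝ => A0hard kp km s Mm V p.1 p.2 * (f : ℝ → ℂ) p.2)
        ((volume.restrict (Tarc kp km)).prod (volume.restrict (Sarc kp km))) :=
      hAm.aestronglyMeasurable.mul (Lp.aestronglyMeasurable f).comp_snd
    exact h1.integral_prod_right'
  have hGbd : ∀ f γ, ‖G f γ‖ ≤ CA0 kp km Mm V * ∫ α in Sarc kp km, ‖(f : ℝ → ℂ) α‖ := by
    intro f γ
    calc ‖G f γ‖ ≤ ∫ α in Sarc kp km, ‖A0hard kp km s Mm V γ α * f α‖ :=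
          norm_integral_le_integral_norm _
      _ ≤ ∫ α in Sarc kp km, CA0 kp km Mm V * ‖(f : ℝ → ℂ) α‖ := by
          refine integral_mono_of_nonneg (Filter.Eventually.of_forall fun α => norm_nonneg _)
            (((hfint f).norm).const_mul _) (Filter.Eventually.of_forall fun α => ?_)
          beta_reduce
          rw [norm_mul]
          exact mul_le_mul_of_nonneg_right (hCA γ α) (norm_nonneg _)
      _ = CA0 kp km Mm V * ∫ α in Sarc kp km, ‖(f : ℝ → ℂ) α‖ := by
          rw [integral_const_mul]
  have hGint : ∀ f, Integrable (G f) (volume.restrict (Tarc kp km)) := fun f =>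
    (memLp_top_of_bound (hGm f) _ (Filter.Eventually.of_forall (hGbd f))).integrable le_top
  -- Fubini swap helper
  have hswap : ∀ (K : ℝ → ℝ → ℂ),
      AEStronglyMeasurable (fun p : ℝ × ℝ => K p.1 p.2)
        ((volume.restrict (Sarc kp km)).prod (volume.restrict (Tarc kp km))) →
      (∃ C, ∀ x y, ‖K x y‖ ≤ C) →
      ∀ g : ℝ → ℂ, Integrable g (volume.restrict (Sarc kp km)) →
      ∫ x in Sarc kp km, ∫ y in Tarc kp km, K x y * g x =
        ∫ y in Tarc kp km, ∫ x in Sarc kp km, K x y * g x := by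
    rintro K hK ⟨C, hC⟩ g hg
    refine integral_integral_swap ?_
    have h1 : Integrable (fun p : ℝ × ℝ => g p.1)
        ((volume.restrict (Sarc kp km)).prod (volume.restrict (Tarc kp km))) := by
      have := hg.mul_prod (integrable_const (1 : ℂ)) (ν := volume.restrict (Tarc kp km))
      simpa using this
    exact h1.bdd_mul hK (Filter.Eventually.of_forall fun p => hC p.1 p.2)
  -- the key identity
  have keyid : ∀ (f : Lp ℂ 2 (volume.restrict (Sarc kp km))) (β : ℝ),
      (∫ α in Sarc kp km, t0hard kp km s Mm V β α * f α) =
        ∫ γ in Tarc kp km, (starRingEnd ℂ) (A0hard kp km s Mm V γ β) * G f γ := by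
    intro f β
    calc (∫ α in Sarc kp km, t0hard kp km s Mm V β α * f α)
        = ∫ α in Sarc kp km, ∫ γ in Tarc kp km,
            (A0hard kp km s Mm V γ α * (starRingEnd ℂ) (A0hard kp km s Mm V γ β)) * f α := by
          refine integral_congr_ae (Filter.Eventually.of_forall fun α => ?_)
          beta_reduce
          rw [t0hard, ← integral_mul_const]
      _ = ∫ γ in Tarc kp km, ∫ α in Sarc kp km,
            (A0hard kp km s Mm V γ α * (starRingEnd ℂ) (A0hard kp km s Mm V γ β)) * f α := by
          refine hswap _ ?_ ⟨CA0 kp km Mm V * CA0 kp km Mm V, fun x y => ?_⟩ _ (hfint f)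
          · refine AEStronglyMeasurable.mul ?_ ?_
            · exact (hAm.comp measurable_swap).aestronglyMeasurable
            · exact ((continuous_star.measurable.comp
                (hAm.comp (measurable_snd.prodMk measurable_const)))).aestronglyMeasurable
          · rw [norm_mul]
            have h1 := hCA y x
            have h2 : ‖(starRingEnd ℂ) (A0hard kp km s Mm V y β)‖ = ‖A0hard kp km s Mm V y β‖ :=
              norm_star _
            rw [h2]
            exact mul_le_mul h1 (hCA y β) (norm_nonneg _) hCAnn
      _ = ∫ γ in Tarc kp km, (starRingEnd ℂ) (A0hard kp km s Mm V γ β) * G f γ := by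
          refine integral_congr_ae (Filter.Eventually.of_forall fun γ => ?_)
          have : (fun α => (A0hard kp km s Mm V γ α * (starRingEnd ℂ) (A0hard kp km s Mm V γ β))
              * (f : ℝ → ℂ) α) =
              fun α => (starRingEnd ℂ) (A0hard kp km s Mm V γ β) *
                (A0hard kp km s Mm V γ α * (f : ℝ → ℂ) α) := funext fun α => by ring
          beta_reduce
          rw [this, integral_const_mul]
  -- inner product identities
  have hinner1 : ∀ f g : Lp ℂ 2 (volume.restrict (Sarc kp km)),
      inner ℂ (T0 f) g =
        ∫ γ in Tarc kp km, (starRingEnd ℂ) (G f γ) * G g γ := by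
    intro f g
    rw [MeasureTheory.L2.inner_def]
    calc (∫ β in Sarc kp km, inner ℂ ((T0 f : ℝ → ℂ) β) ((g : ℝ → ℂ) β))
        = ∫ β in Sarc kp km, (starRingEnd ℂ)
            (∫ γ in Tarc kp km, (starRingEnd ℂ) (A0hard kp km s Mm V γ β) * G f γ) *
              (g : ℝ → ℂ) β := by
          refine integral_congr_ae ?_
          filter_upwards [hT0 f] with β hβ
          rw [RCLike.inner_apply', hβ, keyid f β]
      _ = ∫ β in Sarc kp km, ∫ γ in Tarc kp km,
            (A0hard kp km s Mm V γ β * (starRingEnd ℂ) (G f γ)) * (g : ℝ → ℂ) β := by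
          refine integral_congr_ae (Filter.Eventually.of_forall fun β => ?_)
          beta_reduce
          rw [← integral_conj, ← integral_mul_const]
          refine integral_congr_ae (Filter.Eventually.of_forall fun γ => ?_)
          beta_reduce
          simp only [map_mul, Complex.conj_conj]
      _ = ∫ γ in Tarc kp km, ∫ β in Sarc kp km,
            (A0hard kp km s Mm V γ β * (starRingEnd ℂ) (G f γ)) * (g : ℝ → ℂ) β := by
          refine hswap _ ?_ ⟨CA0 kp km Mm V * (CA0 kp km Mm V *
              ∫ α in Sarc kp km, ‖(f : ℝ → ℂ) α‖), fun x y => ?_⟩ _ (hfint g)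
          · refine AEStronglyMeasurable.mul ?_ ?_
            · exact (hAm.comp measurable_swap).aestronglyMeasurable
            · exact (continuous_star.comp_aestronglyMeasurable (hGm f)).comp_snd
          · rw [norm_mul]
            have h2 : ‖(starRingEnd ℂ) (G f y)‖ = ‖G f y‖ := norm_star _
            rw [h2]
            exact mul_le_mul (hCA y x) (hGbd f y) (norm_nonneg _) hCAnn
      _ = ∫ γ in Tarc kp km, (starRingEnd ℂ) (G f γ) * G g γ := by
          refine integral_congr_ae (Filter.Eventually.of_forall fun γ => ?_)
          have h1 : (fun β => (A0hard kp km s Mm V γ β * (starRingEnd ℂ) (G f γ)) *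
              (g : ℝ → ℂ) β) = fun β => (starRingEnd ℂ) (G f γ) *
                (A0hard kp km s Mm V γ β * (g : ℝ → ℂ) β) := funext fun β => by ring
          beta_reduce
          rw [h1, integral_const_mul]
  have hinner2 : ∀ f g : Lp ℂ 2 (volume.restrict (Sarc kp km)),
      inner ℂ f (T0 g) =
        ∫ γ in Tarc kp km, (starRingEnd ℂ) (G f γ) * G g γ := by
    intro f g
    rw [MeasureTheory.L2.inner_def]
    calc (∫ β in Sarc kp km, inner ℂ ((f : ℝ → ℂ) β) ((T0 g : ℝ → ℂ) β))
        = ∫ β in Sarc kp km, (starRingEnd ℂ) ((f : ℝ → ℂ) β) *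
            ∫ γ in Tarc kp km, (starRingEnd ℂ) (A0hard kp km s Mm V γ β) * G g γ := by
          refine integral_congr_ae ?_
          filter_upwards [hT0 g] with β hβ
          rw [RCLike.inner_apply', hβ, keyid g β]
      _ = ∫ β in Sarc kp km, ∫ γ in Tarc kp km,
            (((starRingEnd ℂ) (A0hard kp km s Mm V γ β)) * G g γ) *
              (starRingEnd ℂ) ((f : ℝ → ℂ) β) := by
          refine integral_congr_ae (Filter.Eventually.of_forall fun β => ?_)
          beta_reduce
          rw [mul_comm, ← integral_mul_const]
      _ = ∫ γ in Tarc kp km, ∫ β in Sarc kp km,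
            (((starRingEnd ℂ) (A0hard kp km s Mm V γ β)) * G g γ) *
              (starRingEnd ℂ) ((f : ℝ → ℂ) β) := by
          refine hswap _ ?_ ⟨CA0 kp km Mm V * (CA0 kp km Mm V *
              ∫ α in Sarc kp km, ‖(g : ℝ → ℂ) α‖), fun x y => ?_⟩ _ ?_
          · refine AEStronglyMeasurable.mul ?_ ?_
            · exact (continuous_star.measurable.comp
                (hAm.comp measurable_swap)).aestronglyMeasurable
            · exact (hGm g).comp_snd
          · rw [norm_mul]
            have h2 : ‖(starRingEnd ℂ) (A0hard kp km s Mm V y x)‖ =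
                ‖A0hard kp km s Mm V y x‖ := norm_star _
            rw [h2]
            exact mul_le_mul (hCA y x) (hGbd g y) (norm_nonneg _) hCAnn
          · refine (hfint f).mono ?_ (Filter.Eventually.of_forall fun β => ?_)
            · exact continuous_star.comp_aestronglyMeasurable (Lp.aestronglyMeasurable f)
            · have : ‖(starRingEnd ℂ) ((f : ℝ → ℂ) β)‖ = ‖(f : ℝ → ℂ) β‖ := norm_star _
              rw [this]
      _ = ∫ γ in Tarc kp km, (starRingEnd ℂ) (G f γ) * G g γ := by
          refine integral_congr_ae (Filter.Eventually.of_forall fun γ => ?_)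
          beta_reduce
          have h1 : (fun β => (((starRingEnd ℂ) (A0hard kp km s Mm V γ β)) * G g γ) *
              (starRingEnd ℂ) ((f : ℝ → ℂ) β)) = fun β => G g γ *
                (starRingEnd ℂ) (A0hard kp km s Mm V γ β * (f : ℝ → ℂ) β) :=
            funext fun β => by rw [map_mul]; ring
          rw [h1, integral_const_mul, integral_conj]
          rw [mul_comm]
  -- self-adjointness
  have hsym : (T0 : Lp ℂ 2 (volume.restrict (Sarc kp km)) →ₗ[ℂ]
      Lp ℂ 2 (volume.restrict (Sarc kp km))).IsSymmetric := by
    intro f g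
    show inner ℂ (T0 f) g = inner ℂ f (T0 g)
    rw [hinner1, hinner2]
  have hsa : IsSelfAdjoint T0 := ContinuousLinearMap.isSelfAdjoint_iff_isSymmetric.mpr hsym
  -- positivity
  have hpos : T0.IsPositive := by
    refine ⟨hsym, fun f => ?_⟩
    rw [ContinuousLinearMap.reApplyInnerSelf_apply, hinner1 f f]
    have hint : Integrable (fun γ => (starRingEnd ℂ) (G f γ) * G f γ)
        (volume.restrict (Tarc kp km)) := by
      refine (hGint f).bdd_mul (continuous_star.comp_aestronglyMeasurable (hGm f))
        (c := CA0 kp km Mm V * ∫ α in Sarc kp km, ‖(f : ℝ → ℂ) α‖)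
        (Filter.Eventually.of_forall fun γ => ?_)
      have h2 : ‖(starRingEnd ℂ) (G f γ)‖ = ‖G f γ‖ := norm_star _
      rw [h2]; exact hGbd f γ
    rw [← integral_re hint]
    refine integral_nonneg fun γ => ?_
    beta_reduce
    rw [mul_comm, Complex.mul_conj]
    simp [RCLike.re_to_complex, Complex.ofReal_re]
    exact Complex.normSq_nonneg _
  -- representation of T0 f
  have hbm_int : ∀ (f : Lp ℂ 2 (volume.restrict (Sarc kp km))) (w : ℝ → ℂ), Measurable w →
      (∃ C, ∀ γ, ‖w γ‖ ≤ C) →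
      Integrable (fun γ => w γ * G f γ) (volume.restrict (Tarc kp km)) :=
    fun f w hw hC => by
      obtain ⟨C, hC⟩ := hC
      exact (hGint f).bdd_mul hw.aestronglyMeasurable (Filter.Eventually.of_forall hC)
  have hwg_meas : ∀ l, Measurable (fun γ => ((V l : ℝ) : ℂ) * ucoef kp km (s l) γ) :=
    fun l => measurable_const.mul (measurable_ucoef kp km (s l))
  have hwg_bd : ∀ l γ, ‖((V l : ℝ) : ℂ) * ucoef kp km (s l) γ‖ ≤ |V l| * 2 := by
    intro l γ
    rw [norm_mul, norm_ofReal]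
    exact mul_le_mul_of_nonneg_left (norm_ucoef_le kp km hμ (s l) γ) (abs_nonneg _)
  have hwh_meas : ∀ l (j : Fin 2), Measurable
      (fun γ => (((∑ i, vdir kp km γ i * Mm l i j : ℝ)) : ℂ) * ucoef kp km (s l) γ) := by
    intro l j
    refine Measurable.mul ?_ (measurable_ucoef kp km (s l))
    exact Complex.measurable_ofReal.comp
      (Finset.measurable_sum _ fun i _ => (measurable_vdir kp km i).mul_const _)
  have hwh_bd : ∀ l (j : Fin 2) γ,
      ‖(((∑ i, vdir kp km γ i * Mm l i j : ℝ)) : ℂ) * ucoef kp km (s l) γ‖ ≤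
        (∑ i : Fin 2, (|kp / km| + 1) * |Mm l i j|) * 2 := by
    intro l j γ
    rw [norm_mul, norm_ofReal]
    refine mul_le_mul ?_ (norm_ucoef_le kp km hμ (s l) γ) (norm_nonneg _)
      (Finset.sum_nonneg fun i _ => by positivity)
    refine (Finset.abs_sum_le_sum_abs _ _).trans (Finset.sum_le_sum fun i _ => ?_)
    rw [abs_mul]
    exact mul_le_mul_of_nonneg_right (abs_vdir_le kp km γ i) (abs_nonneg _)
  set cco : Lp ℂ 2 (volume.restrict (Sarc kp km)) → Fin M → ℂ :=
    fun f l => ∫ γ in Tarc kp km, ((V l : ℝ) : ℂ) * ucoef kp km (s l) γ * G f γ with hcco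
  set dco : Lp ℂ 2 (volume.restrict (Sarc kp km)) → Fin M → Fin 2 → ℂ :=
    fun f l j => ∫ γ in Tarc kp km,
      (((∑ i, vdir kp km γ i * Mm l i j : ℝ)) : ℂ) * ucoef kp km (s l) γ * G f γ with hdco
  have hrep : ∀ f : Lp ℂ 2 (volume.restrict (Sarc kp km)),
      (T0 f : ℝ → ℂ) =ᵐ[volume.restrict (Sarc kp km)]
        fun β => ∑ l, (cco f l * gfun kp km (s l) β +
          ∑ j, dco f l j * hfun kp km (s l) j β) := by
    intro f
    filter_upwards [hT0 f] with β hβ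
    rw [hβ, keyid f β]
    have expand : ∀ γ, (starRingEnd ℂ) (A0hard kp km s Mm V γ β) * G f γ =
        ∑ l, ((((V l : ℝ) : ℂ) * ucoef kp km (s l) γ * G f γ) * gfun kp km (s l) β +
          ∑ j, (((((∑ i, vdir kp km γ i * Mm l i j : ℝ)) : ℂ) * ucoef kp km (s l) γ * G f γ) *
            hfun kp km (s l) j β)) := by
      intro γ
      rw [conjA0, Finset.sum_mul]
      refine Finset.sum_congr rfl fun l _ => ?_
      simp only [mul_add, add_mul, Finset.mul_sum, Finset.sum_mul]
      congr 1
      · ring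
      · exact Finset.sum_congr rfl fun j _ => by ring
    calc (∫ γ in Tarc kp km, (starRingEnd ℂ) (A0hard kp km s Mm V γ β) * G f γ)
        = ∫ γ in Tarc kp km,
            ∑ l, ((((V l : ℝ) : ℂ) * ucoef kp km (s l) γ * G f γ) * gfun kp km (s l) β +
              ∑ j, (((((∑ i, vdir kp km γ i * Mm l i j : ℝ)) : ℂ) * ucoef kp km (s l) γ *
                G f γ) * hfun kp km (s l) j β)) :=
          integral_congr_ae (Filter.Eventually.of_forall expand)
      _ = ∑ l, ∫ γ in Tarc kp km,
            ((((V l : ℝ) : ℂ) * ucoef kp km (s l) γ * G f γ) * gfun kp km (s l) β +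
              ∑ j, (((((∑ i, vdir kp km γ i * Mm l i j : ℝ)) : ℂ) * ucoef kp km (s l) γ *
                G f γ) * hfun kp km (s l) j β)) := by
          refine integral_finset_sum _ fun l _ => ?_
          refine Integrable.add ?_ ?_
          · exact (hbm_int f _ (hwg_meas l) ⟨_, hwg_bd l⟩).mul_const _
          · exact integrable_finset_sum _ fun j _ =>
              (hbm_int f _ (hwh_meas l j) ⟨_, hwh_bd l j⟩).mul_const _
      _ = ∑ l, (cco f l * gfun kp km (s l) β + ∑ j, dco f l j * hfun kp km (s l) j β) := by
          refine Finset.sum_congr rfl fun l _ => ?_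
          rw [integral_add ((hbm_int f _ (hwg_meas l) ⟨_, hwg_bd l⟩).mul_const _)
            (integrable_finset_sum _ fun j _ =>
              (hbm_int f _ (hwh_meas l j) ⟨_, hwh_bd l j⟩).mul_const _)]
          rw [integral_mul_const, integral_finset_sum _ (fun j _ =>
            (hbm_int f _ (hwh_meas l j) ⟨_, hwh_bd l j⟩).mul_const _)]
          congr 1
          exact Finset.sum_congr rfl fun j _ => by rw [integral_mul_const]
  -- the span
  have hgL2 : ∀ l, MemLp (gfun kp km (s l)) 2 (volume.restrict (Sarc kp km)) := fun l =>
    (memLp_top_of_bound (measurable_gfun kp km (s l)).aestronglyMeasurable 2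
      (Filter.Eventually.of_forall (norm_gfun_le kp km hμ (s l)))).mono_exponent le_top
  have hhL2 : ∀ l (j : Fin 2), MemLp (hfun kp km (s l) j) 2 (volume.restrict (Sarc kp km)) :=
    fun l j =>
    (memLp_top_of_bound (measurable_hfun kp km (s l) j).aestronglyMeasurable _
      (Filter.Eventually.of_forall (norm_hfun_le kp km hμ (s l) j))).mono_exponent le_top
  set Φ : (Fin M ⊕ Fin M × Fin 2) → Lp ℂ 2 (volume.restrict (Sarc kp km)) :=
    Sum.elim (fun l => (hgL2 l).toLp _) (fun lj => (hhL2 lj.1 lj.2).toLp _) with hΦ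
  have coe_sum : ∀ (t : Finset (Fin M ⊕ Fin M × Fin 2))
      (F : (Fin M ⊕ Fin M × Fin 2) → Lp ℂ 2 (volume.restrict (Sarc kp km))),
      ((∑ k ∈ t, F k : Lp ℂ 2 (volume.restrict (Sarc kp km))) : ℝ → ℂ)
        =ᵐ[volume.restrict (Sarc kp km)] fun x => ∑ k ∈ t, (F k : ℝ → ℂ) x := by
    intro t F
    induction t using Finset.induction_on with
    | empty => simp only [Finset.sum_empty]; exact Lp.coeFn_zero (E := ℂ) (p := 2) (μ := volume.restrict (Sarc kp km))
    | @insert a t ha ih =>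
      filter_upwards [Lp.coeFn_add (F a) (∑ k ∈ t, F k), ih] with x h1 h2
      rw [Finset.sum_insert ha, Finset.sum_insert ha, h1, Pi.add_apply, h2]
  have hTmem : ∀ f : Lp ℂ 2 (volume.restrict (Sarc kp km)),
      T0 f = ∑ k, (Sum.elim (cco f) (fun lj => dco f lj.1 lj.2) k) • Φ k := by
    intro f
    apply Lp.ext
    have h2 : ∀ᵐ x ∂(volume.restrict (Sarc kp km)), ∀ k : Fin M ⊕ Fin M × Fin 2,
        (((Sum.elim (cco f) (fun lj => dco f lj.1 lj.2) k) • Φ k : Lp ℂ 2 _) : ℝ → ℂ) x =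
          (Sum.elim (cco f) (fun lj => dco f lj.1 lj.2) k) *
            (Sum.elim (fun l => gfun kp km (s l)) (fun lj => hfun kp km (s lj.1) lj.2) k) x := by
      rw [ae_all_iff]
      intro k
      rcases k with l | lj
      · filter_upwards [Lp.coeFn_smul (cco f l) (Φ (Sum.inl l)),
          (hgL2 l).coeFn_toLp] with x h1 h3
        rw [hΦ] at h1 ⊢
        simp only [Sum.elim_inl] at h1 ⊢
        rw [h1, Pi.smul_apply, h3, smul_eq_mul]
      · filter_upwards [Lp.coeFn_smul (dco f lj.1 lj.2) (Φ (Sum.inr lj)),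
          (hhL2 lj.1 lj.2).coeFn_toLp] with x h1 h3
        rw [hΦ] at h1 ⊢
        simp only [Sum.elim_inr] at h1 ⊢
        rw [h1, Pi.smul_apply, h3, smul_eq_mul]
    filter_upwards [hrep f, coe_sum Finset.univ
      (fun k => (Sum.elim (cco f) (fun lj => dco f lj.1 lj.2) k) • Φ k), h2] with x hx h1x h2x
    rw [hx, h1x]
    calc ∑ l, (cco f l * gfun kp km (s l) x + ∑ j, dco f l j * hfun kp km (s l) j x)
        = ∑ k : Fin M ⊕ Fin M × Fin 2, (Sum.elim (cco f) (fun lj => dco f lj.1 lj.2) k) *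
            (Sum.elim (fun l => gfun kp km (s l)) (fun lj => hfun kp km (s lj.1) lj.2) k) x := by
          rw [Fintype.sum_sum_type, Fintype.sum_prod_type, ← Finset.sum_add_distrib]
          simp
      _ = ∑ k : Fin M ⊕ Fin M × Fin 2,
            (((Sum.elim (cco f) (fun lj => dco f lj.1 lj.2) k) • Φ k : Lp ℂ 2 _) : ℝ → ℂ) x :=
          Finset.sum_congr rfl fun k _ => (h2x k).symm
  have hle : LinearMap.range (T0 : Lp ℂ 2 (volume.restrict (Sarc kp km)) →ₗ[ℂ] Lp ℂ 2 (volume.restrict (Sarc kp km))) ≤ Submodule.span ℂ (Set.range Φ) := by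
    rintro y ⟨f, rfl⟩
    show T0 f ∈ Submodule.span ℂ (Set.range Φ)
    rw [hTmem f]
    exact Submodule.sum_mem _ fun k _ =>
      Submodule.smul_mem _ _ (Submodule.subset_span ⟨k, rfl⟩)
  refine ⟨hsa, hpos, fun f => ⟨cco f, dco f, hrep f⟩, ?_⟩
  haveI : FiniteDimensional ℂ (Submodule.span ℂ (Set.range Φ)) :=
    FiniteDimensional.span_of_finite ℂ (Set.finite_range Φ)
  calc Module.finrank ℂ (LinearMap.range (T0 : Lp ℂ 2 (volume.restrict (Sarc kp km)) →ₗ[ℂ] Lp ℂ 2 (volume.restrict (Sarc kp km))))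
      ≤ Module.finrank ℂ (Submodule.span ℂ (Set.range Φ)) := Submodule.finrank_mono hle
    _ ≤ Fintype.card (Fin M ⊕ Fin M × Fin 2) := finrank_range_le_card Φ
    _ = 3 * M := by simp [Fintype.card_sum, Fintype.card_prod, Fintype.card_fin]; ring
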